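/- Let H be a real Hilbert space, R ⊆ H bounded with ‖r‖ ≤ 1 for all r ∈ R, ε ∈ (0,1], k ≥ 1. Define φ(x) = sup over t ∈ [ε,2] and pairwise orthogonal r₁,…,r_k ∈ R of (∑_{i=1}^k |⟨r_i,x⟩|^t) / (1 + ‖(‖r₁‖^t, …, ‖r_k‖^t)‖_{2/(2−t)}). Then for all x, y in the unit ball of H with d_R(x,y) ≤ 1, one has φ(y) ≥ φ(x) − 2k · d_R(x,y)^ε, where d_R(x,y) = sup_{r∈R}|⟨r,x−y⟩|. Hence φ is continuous with respect to the d_R-pseudometric on the unit ball. -/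
import Mathlib


open scoped RealInnerProductSpace

noncomputable def dR {H : Type*} [NormedAddCommGroup H] [InnerProductSpace ℝ H]
    (R : Set H) (x y : H) : ℝ :=
  ⨆ r : R, |⟪(r : H), x - y⟫|

/-- The `L^p` norm of the vector `(‖r₁‖^t, …, ‖r_k‖^t)` with `p = 2/(2-t)`
(the `L^∞` norm, i.e. the maximum, when `t = 2`). -/
noncomputable def pNorm {H : Type*} [NormedAddCommGroup H] [InnerProductSpace ℝ H]
    {k : ℕ} (t : ℝ) (r : Fin k → H) : ℝ :=
  if t < 2 then (∑ i, ‖r i‖ ^ (t * (2 / (2 - t)))) ^ ((2 - t) / 2)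
  else ⨆ i, ‖r i‖ ^ t

/-- The function `φ_k` of the paper. -/
noncomputable def phi {H : Type*} [NormedAddCommGroup H] [InnerProductSpace ℝ H]
    (R : Set H) (ε : ℝ) (k : ℕ) (x : H) : ℝ :=
  sSup {v : ℝ | ∃ t ∈ Set.Icc ε 2, ∃ r : Fin k → H,
    (∀ i, r i ∈ R) ∧ (∀ i j, i ≠ j → ⟪r i, r j⟫ = 0) ∧
    v = (∑ i, |⟪r i, x⟫| ^ t) / (1 + pNorm t r)}

lemma pNorm_nonneg {H : Type*} [NormedAddCommGroup H] [InnerProductSpace ℝ H]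
    {k : ℕ} (t : ℝ) (r : Fin k → H) : 0 ≤ pNorm t r := by
  unfold pNorm
  split
  · positivity
  · exact Real.iSup_nonneg fun i => Real.rpow_nonneg (norm_nonneg _) _

lemma real_rpow_add_le (b δ t : ℝ) (hb : 0 ≤ b) (hδ : 0 ≤ δ) (ht0 : 0 ≤ t) (ht1 : t ≤ 1) :
    (b + δ) ^ t ≤ b ^ t + δ ^ t := by
  lift b to NNReal using hb
  lift δ to NNReal using hδ
  rw [← NNReal.coe_add, ← NNReal.coe_rpow, ← NNReal.coe_rpow, ← NNReal.coe_rpow,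
    ← NNReal.coe_add, NNReal.coe_le_coe]
  exact NNReal.rpow_add_le_add_rpow _ _ ht0 ht1

/-- The key elementary inequality. -/
lemma key_ineq (a b c ε t : ℝ) (ha0 : 0 ≤ a) (ha1 : a ≤ 1) (hb0 : 0 ≤ b) (hb1 : b ≤ 1)
    (hc0 : 0 ≤ c) (hc1 : c ≤ 1) (hab : |a - b| ≤ c) (hε0 : 0 < ε) (hε1 : ε ≤ 1)
    (htε : ε ≤ t) (ht2 : t ≤ 2) : a ^ t - b ^ t ≤ 2 * c ^ ε := by
  have ht0 : 0 < t := lt_of_lt_of_le hε0 htε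
  have hcε : 0 ≤ c ^ ε := Real.rpow_nonneg hc0 _
  rcases le_or_gt a b with h | h
  · have : a ^ t ≤ b ^ t := Real.rpow_le_rpow ha0 h ht0.le
    linarith
  · set δ := a - b with hδdef
    have hδ0 : 0 < δ := by simp [hδdef]; linarith
    have hδc : δ ≤ c := by rw [abs_of_pos hδ0] at hab; exact hab
    have hδ1 : δ ≤ 1 := hδc.trans hc1
    have hδε : δ ^ ε ≤ c ^ ε := Real.rpow_le_rpow hδ0.le hδc hε0.le
    rcases le_or_gt t 1 with ht1 | ht1
    · -- t ≤ 1 : subadditivity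
      have h1 : a ^ t ≤ b ^ t + δ ^ t := by
        have := real_rpow_add_le b δ t hb0 hδ0.le ht0.le ht1
        have hba : b + δ = a := by ring
        rwa [hba] at this
      have h2 : δ ^ t ≤ δ ^ ε := Real.rpow_le_rpow_of_exponent_ge hδ0 hδ1 htε
      linarith
    · -- 1 < t : Lipschitz bound a^t - b^t ≤ 2δ
      have ha0' : 0 < a := lt_of_le_of_lt hb0 h
      have hmain : a ^ t - b ^ t ≤ 2 * δ := by
        rcases eq_or_lt_of_le hb0 with hb | hb
        · -- b = 0
          have hbt : b ^ t = 0 := by rw [← hb, Real.zero_rpow ht0.ne']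
          have : a ^ t ≤ a ^ (1:ℝ) :=
            Real.rpow_le_rpow_of_exponent_ge ha0' ha1 ht1.le
          rw [Real.rpow_one] at this
          have hδa : δ = a := by rw [hδdef, ← hb]; ring
          rw [hbt]
          linarith
        · -- 0 < b
          have key : b * a ^ (t - 1) ≤ a * b ^ (t - 1) := by
            have h1 : a ^ (t - 2) ≤ b ^ (t - 2) :=
              Real.rpow_le_rpow_of_nonpos hb h.le (by linarith)
            have ha' : a ^ (t - 1) = a ^ (t - 2) * a := by
              rw [← Real.rpow_add_one ha0'.ne']; ring_nf
            have hb' : b ^ (t - 1) = b ^ (t - 2) * b := by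
              rw [← Real.rpow_add_one hb.ne']; ring_nf
            rw [ha', hb']
            calc b * (a ^ (t - 2) * a) = (a * b) * a ^ (t - 2) := by ring
              _ ≤ (a * b) * b ^ (t - 2) := by
                  apply mul_le_mul_of_nonneg_left h1 (by positivity)
              _ = a * (b ^ (t - 2) * b) := by ring
          have hfact : a ^ t - b ^ t ≤ (a - b) * (a ^ (t - 1) + b ^ (t - 1)) := by
            have ha' : a ^ t = a * a ^ (t - 1) := by
              rw [mul_comm, ← Real.rpow_add_one ha0'.ne']; ring_nf
            have hb' : b ^ t = b * b ^ (t - 1) := by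
              rw [mul_comm, ← Real.rpow_add_one hb.ne']; ring_nf
            rw [ha', hb']
            nlinarith [key]
          have hA : a ^ (t - 1) ≤ 1 := Real.rpow_le_one ha0 ha1 (by linarith)
          have hB : b ^ (t - 1) ≤ 1 := Real.rpow_le_one hb0 hb1 (by linarith)
          have hApos : 0 ≤ a ^ (t - 1) := Real.rpow_nonneg ha0 _
          have hBpos : 0 ≤ b ^ (t - 1) := Real.rpow_nonneg hb0 _
          calc a ^ t - b ^ t ≤ (a - b) * (a ^ (t - 1) + b ^ (t - 1)) := hfact
            _ ≤ (a - b) * 2 := by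
                apply mul_le_mul_of_nonneg_left (by linarith) hδ0.le
            _ = 2 * δ := by rw [hδdef]; ring
      have hδδε : δ ≤ δ ^ ε := by
        have := Real.rpow_le_rpow_of_exponent_ge hδ0 hδ1 hε1
        rwa [Real.rpow_one] at this
      linarith

theorem stmt18 {H : Type*} [NormedAddCommGroup H] [InnerProductSpace ℝ H] [CompleteSpace H]
    (R : Set H) (hR : ∀ r ∈ R, ‖r‖ ≤ 1) (hRbdd : Bornology.IsBounded R)
    (ε : ℝ) (hε0 : 0 < ε) (hε1 : ε ≤ 1) (k : ℕ) (hk : 1 ≤ k)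
    (x y : H) (hx : ‖x‖ ≤ 1) (hy : ‖y‖ ≤ 1) (hd : dR R x y ≤ 1) :
    phi R ε k x - 2 * k * (dR R x y) ^ ε ≤ phi R ε k y := by
  set d := dR R x y with hd_def
  have hd0 : 0 ≤ d := Real.iSup_nonneg fun r => abs_nonneg _
  have hdε0 : 0 ≤ d ^ ε := Real.rpow_nonneg hd0 _
  -- inner product bounds
  have hin : ∀ r ∈ R, ∀ z : H, ‖z‖ ≤ 1 → |⟪r, z⟫| ≤ 1 := by
    intro r hr z hz
    calc |⟪r, z⟫| ≤ ‖r‖ * ‖z‖ := abs_real_inner_le_norm r z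
      _ ≤ 1 * 1 := mul_le_mul (hR r hr) hz (norm_nonneg _) zero_le_one
      _ = 1 := one_mul 1
  -- distance bound
  have hdle : ∀ r ∈ R, |⟪r, x - y⟫| ≤ d := by
    intro r hr
    have hbd : BddAbove (Set.range fun r : R => |⟪(r : H), x - y⟫|) := by
      refine ⟨2, ?_⟩
      rintro v ⟨⟨s, hs⟩, rfl⟩
      calc |⟪(s : H), x - y⟫| ≤ ‖s‖ * ‖x - y‖ := abs_real_inner_le_norm _ _
        _ ≤ 1 * 2 := by
            apply mul_le_mul (hR s hs) ?_ (norm_nonneg _) zero_le_one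
            calc ‖x - y‖ ≤ ‖x‖ + ‖y‖ := norm_sub_le x y
              _ ≤ 2 := by linarith
        _ = 2 := by norm_num
    exact le_ciSup hbd ⟨r, hr⟩
  -- the set for y
  set Sy := {v : ℝ | ∃ t ∈ Set.Icc ε 2, ∃ r : Fin k → H,
    (∀ i, r i ∈ R) ∧ (∀ i j, i ≠ j → ⟪r i, r j⟫ = 0) ∧
    v = (∑ i, |⟪r i, y⟫| ^ t) / (1 + pNorm t r)} with hSy_def
  have hSy_nonneg : ∀ v ∈ Sy, 0 ≤ v := by
    rintro v ⟨t, ⟨htε, ht2⟩, r, hrR, horth, rfl⟩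
    apply div_nonneg
    · exact Finset.sum_nonneg fun i _ => Real.rpow_nonneg (abs_nonneg _) _
    · have := pNorm_nonneg t r; linarith
  have hSy_bdd : BddAbove Sy := by
    refine ⟨k, ?_⟩
    rintro v ⟨t, ⟨htε, ht2⟩, r, hrR, horth, rfl⟩
    have ht0 : 0 < t := lt_of_lt_of_le hε0 htε
    have hA : (∑ i, |⟪r i, y⟫| ^ t) ≤ k := by
      calc (∑ i, |⟪r i, y⟫| ^ t) ≤ ∑ _i : Fin k, (1 : ℝ) := by
            apply Finset.sum_le_sum
            intro i _
            exact Real.rpow_le_one (abs_nonneg _) (hin _ (hrR i) y hy) ht0.le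
        _ = k := by simp
    have hD : 1 ≤ 1 + pNorm t r := by have := pNorm_nonneg t r; linarith
    calc (∑ i, |⟪r i, y⟫| ^ t) / (1 + pNorm t r) ≤ (∑ i, |⟪r i, y⟫| ^ t) := by
          apply div_le_self (Finset.sum_nonneg fun i _ => Real.rpow_nonneg (abs_nonneg _) _) hD
      _ ≤ k := hA
  -- main bound
  have hmain : phi R ε k x ≤ phi R ε k y + 2 * k * d ^ ε := by
    unfold phi
    apply Real.sSup_le
    · rintro v ⟨t, ⟨htε, ht2⟩, r, hrR, horth, rfl⟩
      set A := ∑ i, |⟪r i, x⟫| ^ t with hA_def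
      set B := ∑ i, |⟪r i, y⟫| ^ t with hB_def
      set D := 1 + pNorm t r with hD_def
      have hD1 : 1 ≤ D := by have := pNorm_nonneg t r; simp [hD_def]; linarith
      have hD0 : 0 < D := lt_of_lt_of_le one_pos hD1
      have hBin : B / D ∈ Sy := ⟨t, ⟨htε, ht2⟩, r, hrR, horth, rfl⟩
      have hBle : B / D ≤ sSup Sy := le_csSup hSy_bdd hBin
      have hAB : A - B ≤ 2 * k * d ^ ε := by
        have hsum : A - B = ∑ i, (|⟪r i, x⟫| ^ t - |⟪r i, y⟫| ^ t) := by
          rw [hA_def, hB_def, Finset.sum_sub_distrib]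
        rw [hsum]
        calc (∑ i, (|⟪r i, x⟫| ^ t - |⟪r i, y⟫| ^ t))
            ≤ ∑ _i : Fin k, 2 * d ^ ε := by
              apply Finset.sum_le_sum
              intro i _
              apply key_ineq _ _ _ _ _ (abs_nonneg _) (hin _ (hrR i) x hx)
                (abs_nonneg _) (hin _ (hrR i) y hy) hd0 hd ?_ hε0 hε1 htε ht2
              calc |(|⟪r i, x⟫| - |⟪r i, y⟫|)| ≤ |⟪r i, x⟫ - ⟪r i, y⟫| :=
                    abs_abs_sub_abs_le_abs_sub _ _
                _ = |⟪r i, x - y⟫| := by rw [inner_sub_right]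
                _ ≤ d := hdle _ (hrR i)
          _ = k * (2 * d ^ ε) := by
              rw [Finset.sum_const, Finset.card_fin, nsmul_eq_mul]
          _ = 2 * k * d ^ ε := by ring
      have hdiv : (A - B) / D ≤ 2 * k * d ^ ε := by
        rw [div_le_iff₀ hD0]
        have h2 : (0:ℝ) ≤ 2 * k * d ^ ε := by positivity
        nlinarith
      have : A / D ≤ B / D + 2 * k * d ^ ε := by
        have : A / D - B / D = (A - B) / D := by rw [div_sub_div_same]
        linarith
      calc A / D ≤ B / D + 2 * k * d ^ ε := this
        _ ≤ sSup Sy + 2 * k * d ^ ε := by linarith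
    · have : 0 ≤ sSup Sy := Real.sSup_nonneg hSy_nonneg
      have h2 : (0:ℝ) ≤ 2 * k * d ^ ε := by positivity
      rw [hSy_def] at this
      linarith
  linarith
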